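/- arXiv:1601.02793 — 2 statements merged into one kernel-verified Lean document; each statement's English description precedes it below -/
import Mathlib

section
/- Let P = [m] be the totally ordered set on m elements. An isotone map φ ∈ Hom([m],[n]) is upper normal if and only if φ(m) = n, and this holds if and only if T_*(φ) is a maximal chain in the product order [m]×[n] (i.e., a lattice path from (1,1) to (m,n)). -/
/-
Write `⊤ = n - 1` for the top of `Fin n` and `t` for the top of the finite linear order `P`.
Always `φ ≤ (φ₋)⁺`, and conversely `(φ₋)⁺(p) ≤ φ₋(p⁺) ≤ φ(p)` for the successor `p⁺` of any
`p ≠ t` by monotonicity, while `(φ₋)⁺(t) = ⊤`; so `φ` is upper normal iff `φ(t) = ⊤`.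

`T_*(φ)` is the set of `(p, i)` with `φ₋(p) ≤ i ≤ φ(p)`, a chain because `φ₋(p') ≥ φ(p)` for
`p < p'`. The greatest element `(t, ⊤)` of `P × Fin n` lies in every maximal chain, forcing
`φ(t) = ⊤`. Conversely, if `φ(t) = ⊤` then every `(p, i) ∉ T_*(φ)` is incomparable with a point of
`T_*(φ)`: with `(q, φ q)` for some `q < p` with `φ q > i` if `i ≤ φ p`, and otherwise with
`(p', φ₋ p')` for the least `p'` with `i ≤ φ p'`.
-/

variable {P : Type*} [PartialOrder P] [Fintype P]

/-- `φ₋(p) = max {φ q | q < p}`, the max of the empty set being the bottom element of `[n]`. -/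
def phiMinus [DecidableRel ((· < ·) : P → P → Prop)] {n : ℕ} (hn : 0 < n)
    (φ : P → Fin n) (p : P) : Fin n :=
  (insert (⟨0, hn⟩ : Fin n) ((Finset.univ.filter fun q => q < p).image φ)).sup'
    (Finset.insert_nonempty _ _) id

/-- `φ⁺(p) = min {φ q | p < q}`, the min of the empty set being the top element of `[n]`. -/
def phiPlus [DecidableRel ((· < ·) : P → P → Prop)] {n : ℕ} (hn : 0 < n)
    (φ : P → Fin n) (p : P) : Fin n :=
  (insert (⟨n - 1, by omega⟩ : Fin n) ((Finset.univ.filter fun q => p < q).image φ)).inf'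
    (Finset.insert_nonempty _ _) id

/-- `T_*(φ) = {(p,i) | φ q ≤ i ≤ φ p for all q < p}`. -/
def Tstar {n : ℕ} (φ : P → Fin n) : Set (P × Fin n) :=
  {x | x.2 ≤ φ x.1 ∧ ∀ q : P, q < x.1 → φ q ≤ x.2}

theorem IsMaxChain.mem_of_isTop {α : Type*} [LE α] {s : Set α} {x : α}
    (h : IsMaxChain (· ≤ ·) s) (hx : IsTop x) : x ∈ s :=
  (h.2 (h.1.insert fun y _ _ => Or.inr (hx y)) <| Set.subset_insert _ _).symm ▸ Set.mem_insert _ _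

theorem IsChain.isMaxChain_of_exists_incomparable {α : Type*} {r : α → α → Prop} {s : Set α}
    (hs : IsChain r s) (h : ∀ x ∉ s, ∃ y ∈ s, ¬ r x y ∧ ¬ r y x) : IsMaxChain r s := by
  refine ⟨hs, fun t ht hst => hst.antisymm fun x hxt => ?_⟩
  by_contra hxs
  obtain ⟨y, hys, hxy, hyx⟩ := h x hxs
  have hne : x ≠ y := fun hxy => hxs (hxy ▸ hys)
  exact (ht hxt (hst hys) hne).elim hxy hyx

theorem Fin.isTop_mk_sub_one {n : ℕ} (h : n - 1 < n) : IsTop (⟨n - 1, h⟩ : Fin n) :=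
  fun i => Nat.le_sub_one_of_lt i.isLt

section Normalization

variable [DecidableRel ((· < ·) : P → P → Prop)] {n : ℕ} (hn : 0 < n) {φ : P → Fin n}
  {p : P} {j : Fin n}
include hn

theorem phiMinus_le_iff : phiMinus hn φ p ≤ j ↔ ∀ q < p, φ q ≤ j := by
  simp only [phiMinus, Finset.sup'_le_iff, Finset.forall_mem_insert, Finset.forall_mem_image,
    Finset.mem_filter, Finset.mem_univ, true_and, id]
  exact and_iff_right (Nat.zero_le _)

theorem phiMinus_lt_iff : phiMinus hn φ p < j ↔ (⟨0, hn⟩ : Fin n) < j ∧ ∀ q < p, φ q < j := by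
  simp [phiMinus, Finset.sup'_lt_iff]

theorem le_phiPlus_iff : j ≤ phiPlus hn φ p ↔ ∀ q, p < q → j ≤ φ q := by
  simp [phiPlus, Fin.isTop_mk_sub_one _ j]

theorem phiMinus_le_self (hφ : Monotone φ) : phiMinus hn φ p ≤ φ p :=
  (phiMinus_le_iff hn).2 fun _ hq => hφ hq.le

theorem phiPlus_of_isMax (hp : IsMax p) : phiPlus hn φ p = ⟨n - 1, by omega⟩ :=
  (Fin.isTop_mk_sub_one _ _).antisymm <| (le_phiPlus_iff hn).2 fun _ hq => absurd hq hp.not_lt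

theorem le_phiPlus_phiMinus : φ p ≤ phiPlus hn (phiMinus hn φ) p :=
  (le_phiPlus_iff hn).2 fun _ hq => (phiMinus_le_iff hn).1 le_rfl p hq

theorem mem_Tstar_iff {x : P × Fin n} : x ∈ Tstar φ ↔ phiMinus hn φ x.1 ≤ x.2 ∧ x.2 ≤ φ x.1 := by
  rw [Tstar, Set.mem_ofPred_eq, phiMinus_le_iff hn, and_comm]

end Normalization

section LinearOrder

variable {α : Type*} [LinearOrder α] [Fintype α] [DecidableRel ((· < ·) : α → α → Prop)]
  {n : ℕ} (hn : 0 < n) {φ : α → Fin n} {t : α}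
include hn

theorem phiPlus_phiMinus_le_of_covBy (hφ : Monotone φ) {p q : α} (hpq : p ⋖ q) :
    phiPlus hn (phiMinus hn φ) p ≤ φ p :=
  ((le_phiPlus_iff hn).1 le_rfl q hpq.lt).trans <|
    (phiMinus_le_iff hn).2 fun _ hr => hφ (hpq.le_of_lt hr)

theorem phiPlus_phiMinus_eq_self_iff (hφ : Monotone φ) (ht : IsTop t) :
    phiPlus hn (phiMinus hn φ) = φ ↔ φ t = ⟨n - 1, by omega⟩ := by
  refine ⟨fun h => h ▸ phiPlus_of_isMax hn ht.isMax, fun htop => funext fun p => ?_⟩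
  refine le_antisymm ?_ (le_phiPlus_phiMinus hn)
  by_cases hp : IsMax p
  · obtain rfl : p = t := (ht p).antisymm (hp (ht p))
    exact (phiPlus_of_isMax hn hp).trans_le htop.ge
  · obtain ⟨q, hpq⟩ := exists_covBy_of_wellFoundedLT hp
    exact phiPlus_phiMinus_le_of_covBy hn hφ hpq

omit [Fintype α] [DecidableRel ((· < ·) : α → α → Prop)] hn in
theorem isChain_Tstar : IsChain (· ≤ ·) (Tstar φ) := by
  rintro ⟨p, i⟩ ⟨hip, hi⟩ ⟨p', i'⟩ ⟨hip', hi'⟩ -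
  rcases lt_trichotomy p p' with h | rfl | h
  · exact Or.inl ⟨h.le, hip.trans (hi' p h)⟩
  · exact (le_total i i').imp (⟨le_rfl, ·⟩) (⟨le_rfl, ·⟩)
  · exact Or.inr ⟨h.le, hip'.trans (hi p' h)⟩

theorem exists_incomparable_of_notMem_Tstar (hφ : Monotone φ)
    (htop : φ t = ⟨n - 1, by omega⟩) {x : α × Fin n} (hx : x ∉ Tstar φ) :
    ∃ y ∈ Tstar φ, ¬ x ≤ y ∧ ¬ y ≤ x := by
  obtain ⟨p, i⟩ := x
  rw [mem_Tstar_iff hn, not_and_or, not_le, not_le] at hx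
  rcases hx with hlt | hφp
  · obtain ⟨q, hqp, hiq⟩ : ∃ q < p, i < φ q := by
      simpa using mt (phiMinus_le_iff hn).2 hlt.not_ge
    refine ⟨(q, φ q), (mem_Tstar_iff hn).2 ⟨phiMinus_le_self hn hφ, le_rfl⟩, ?_, ?_⟩
    · exact fun h => hqp.not_ge h.1
    · exact fun h => hiq.not_ge h.2
  · have hi_top : i ≤ φ t := htop ▸ Fin.isTop_mk_sub_one _ i
    obtain ⟨p', hp', hmin⟩ :=
      (Finset.univ.filter fun r => i ≤ φ r).exists_minimal ⟨t, by simpa using hi_top⟩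
    simp only [Finset.mem_filter, Finset.mem_univ, true_and] at hp' hmin
    have hpp' : p < p' := lt_of_not_ge fun h => (hφ h).not_gt (hφp.trans_le hp')
    have hbelow : phiMinus hn φ p' < i := (phiMinus_lt_iff hn).2
      ⟨(Nat.zero_le _ : (⟨0, hn⟩ : Fin n) ≤ φ p).trans_lt hφp,
        fun r hr => lt_of_not_ge fun h => (hmin h hr.le).not_gt hr⟩
    refine ⟨(p', phiMinus hn φ p'), (mem_Tstar_iff hn).2 ⟨le_rfl, phiMinus_le_self hn hφ⟩, ?_, ?_⟩
    · exact fun h => hbelow.not_ge h.2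
    · exact fun h => hpp'.not_ge h.1

theorem isMaxChain_Tstar_iff (hφ : Monotone φ) (ht : IsTop t) :
    IsMaxChain (· ≤ ·) (Tstar φ) ↔ φ t = ⟨n - 1, by omega⟩ := by
  refine ⟨fun h => ?_, fun htop => ?_⟩
  · have htop_mem : (t, (⟨n - 1, by omega⟩ : Fin n)) ∈ Tstar φ :=
      h.mem_of_isTop fun _ => ⟨ht _, Fin.isTop_mk_sub_one _ _⟩
    exact (Fin.isTop_mk_sub_one _ _).antisymm htop_mem.1
  · exact isChain_Tstar.isMaxChain_of_exists_incomparable fun _ hx =>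
      exists_incomparable_of_notMem_Tstar hn hφ htop hx

end LinearOrder

/-- For P = [m] totally ordered, an isotone map φ : [m] → [n] is upper normal iff φ(m) = n,
iff T_*(φ) is a maximal chain in the product order [m] × [n] (a lattice path from (1,1)
to (m,n)). -/
theorem stmt8 {m n : ℕ} (hm : 0 < m) (hn : 0 < n) (φ : Fin m → Fin n) (hφ : Monotone φ) :
    ((φ = phiPlus hn (phiMinus hn φ)) ↔ φ ⟨m - 1, by omega⟩ = (⟨n - 1, by omega⟩ : Fin n)) ∧
      ((φ = phiPlus hn (phiMinus hn φ)) ↔ IsMaxChain (· ≤ ·) (Tstar φ)) := by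
  have ht : IsTop (⟨m - 1, by omega⟩ : Fin m) := Fin.isTop_mk_sub_one _
  have hnormal := eq_comm.trans (phiPlus_phiMinus_eq_self_iff hn hφ ht)
  exact ⟨hnormal, hnormal.trans (isMaxChain_Tstar_iff hn hφ ht).symm⟩
end

section
/- Let n ≥ 2, let P be a nonempty antichain, and let J = Hom(P,[n]) be the full poset of isotone maps (which here consists of all functions P → [n]). Then every face G of Δ(J) of cardinality |P|·(n−1) − 1 is contained in exactly two facets of Δ(J). -/
variable {P : Type*} [PartialOrder P] [Fintype P] [DecidableEq P]

/-- The graph `Γφ = {(p, φ p) | p ∈ P}` of a map φ : P → [n], as a finite set. -/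
def GammaF {n : ℕ} (φ : P → Fin n) : Finset (P × Fin n) :=
  Finset.univ.image fun p => (p, φ p)

/-- F is a face of Δ(J) iff F misses the graph Γφ of some φ ∈ J. -/
def IsFace {n : ℕ} (J : Set (P → Fin n)) (F : Finset (P × Fin n)) : Prop :=
  ∃ φ ∈ J, ∀ p : P, (p, φ p) ∉ F

/-- A facet of Δ(J) is a face maximal under inclusion. -/
def IsFacet {n : ℕ} (J : Set (P → Fin n)) (F : Finset (P × Fin n)) : Prop :=
  IsFace J F ∧ ∀ G : Finset (P × Fin n), IsFace J G → F ⊆ G → F = G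

/-!
A facet of `Δ(J)` is the complement of a graph `Γφ`, `φ ∈ J`. A face `G ⊆ Γφᶜ` one element short
of a facet is `Γφᶜ` with a single point `x = (p, j)`, `j ≠ φ p`, removed, so a facet `Γψᶜ` contains
`G` iff `Γψ ⊆ Γφ ∪ {x}`. As `Γψ` meets each fibre `{p} × [n]` exactly once, this forces `ψ = φ` or
`ψ = φ[p ↦ j]`, and both are isotone because `P` is an antichain.
-/

section Graphs

variable {α : Type*} [Fintype α] [DecidableEq α] {n : ℕ}

lemma mem_GammaF (φ : α → Fin n) (x : α × Fin n) : x ∈ GammaF φ ↔ φ x.1 = x.2 := by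
  obtain ⟨p, j⟩ := x
  simp [GammaF, Prod.ext_iff]

lemma card_compl_GammaF (φ : α → Fin n) :
    (GammaF φ)ᶜ.card = Fintype.card α * (n - 1) := by
  rw [Finset.card_compl, GammaF, Finset.card_image_of_injective _ fun _ _ h => congrArg Prod.fst h,
    Finset.card_univ, Fintype.card_prod, Fintype.card_fin, Nat.mul_sub_one]

lemma GammaF_subset_GammaF_iff {φ ψ : α → Fin n} : GammaF ψ ⊆ GammaF φ ↔ ψ = φ := by
  refine ⟨fun h => funext fun p => ?_, fun h => h ▸ subset_rfl⟩
  exact ((mem_GammaF φ _).1 (h ((mem_GammaF ψ (p, ψ p)).2 rfl))).symm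

lemma GammaF_subset_insert_iff {φ ψ : α → Fin n} {x : α × Fin n} :
    GammaF ψ ⊆ insert x (GammaF φ) ↔ ψ = φ ∨ ψ = Function.update φ x.1 x.2 := by
  have hgraph : GammaF ψ ⊆ insert x (GammaF φ) ↔ ∀ p, (p, ψ p) = x ∨ φ p = ψ p := by
    simp only [Finset.subset_iff, Finset.mem_insert, mem_GammaF, Prod.forall]
    exact ⟨fun h p => h p _ rfl, fun h p j hj => hj ▸ h p⟩
  rw [hgraph]
  constructor
  · intro h
    by_cases hx : ψ x.1 = x.2
    · refine Or.inr (funext fun p => ?_)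
      rcases eq_or_ne p x.1 with rfl | hp
      · simpa using hx
      · rw [Function.update_of_ne hp]
        exact (h p).resolve_left (fun hpx => hp (congrArg Prod.fst hpx)) |>.symm
    · refine Or.inl (funext fun p => ((h p).resolve_left fun hpx => hx ?_).symm)
      rw [← hpx]
  · rintro (rfl | rfl) p
    · exact Or.inr rfl
    · rcases eq_or_ne p x.1 with rfl | hp
      · exact Or.inl (by simp)
      · exact Or.inr (Function.update_of_ne hp _ _).symm

lemma isFace_iff (J : Set (α → Fin n)) {F : Finset (α × Fin n)} :
    IsFace J F ↔ ∃ φ ∈ J, F ⊆ (GammaF φ)ᶜ := by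
  simp only [IsFace, Finset.subset_compl_comm (s := F), Finset.subset_iff, mem_GammaF,
    Finset.mem_compl, Prod.forall]
  refine exists_congr fun φ => and_congr_right fun _ => ?_
  exact ⟨fun h p j hj => hj ▸ h p, fun h p => h p (φ p) rfl⟩

lemma isFacet_iff (J : Set (α → Fin n)) {F : Finset (α × Fin n)} :
    IsFacet J F ↔ ∃ φ ∈ J, F = (GammaF φ)ᶜ := by
  have hface : ∀ φ ∈ J, IsFace J (GammaF φ)ᶜ := fun φ hφ => (isFace_iff J).2 ⟨φ, hφ, subset_rfl⟩
  constructor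
  · rintro ⟨hF, hmax⟩
    obtain ⟨φ, hφ, hFφ⟩ := (isFace_iff J).1 hF
    exact ⟨φ, hφ, hmax _ (hface φ hφ) hFφ⟩
  · rintro ⟨φ, hφ, rfl⟩
    refine ⟨hface φ hφ, fun F' hF' hφF' => ?_⟩
    obtain ⟨ψ, -, hF'ψ⟩ := (isFace_iff J).1 hF'
    have hψφ : ψ = φ :=
      GammaF_subset_GammaF_iff.1 (Finset.compl_subset_compl.1 (hφF'.trans hF'ψ))
    exact hφF'.antisymm (hψφ ▸ hF'ψ)

end Graphs

lemma setOf_monotone_eq_univ {α β : Type*} [Preorder α] [Preorder β]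
    (hanti : ∀ a b : α, a ≤ b → a = b) : {φ : α → β | Monotone φ} = Set.univ :=
  Set.eq_univ_of_forall fun _ a b hab => by rw [hanti a b hab]

/-- Let n ≥ 2, P a nonempty antichain, and J = Hom(P,[n]) the full poset of isotone maps
(= all functions P → [n]).  Then every face G of Δ(J) of cardinality |P|·(n−1) − 1 is
contained in exactly two facets of Δ(J). -/
theorem stmt18 [Nonempty P] {n : ℕ} (hn : 2 ≤ n)
    (hanti : ∀ a b : P, a ≤ b → a = b)
    (G : Finset (P × Fin n))
    (hG : IsFace {φ : P → Fin n | Monotone φ} G)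
    (hcard : G.card = Fintype.card P * (n - 1) - 1) :
    ∃ F₁ F₂ : Finset (P × Fin n), F₁ ≠ F₂ ∧
      (∀ F : Finset (P × Fin n),
        (IsFacet {φ : P → Fin n | Monotone φ} F ∧ G ⊆ F) ↔ (F = F₁ ∨ F = F₂)) := by
  obtain ⟨φ, -, hGφ⟩ := (isFace_iff _).1 hG
  -- `|P|·(n - 1) - 1` in `hcard` is a true predecessor, not a truncated `0 - 1`
  have hpos : 0 < Fintype.card P * (n - 1) := Nat.mul_pos Fintype.card_pos (by omega)
  obtain ⟨x, hxG, hx⟩ := Finset.exists_eq_insert_iff.2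
    ⟨hGφ, by rw [card_compl_GammaF]; omega⟩
  have hxφ : x ∉ GammaF φ := Finset.mem_compl.1 (hx ▸ Finset.mem_insert_self x G)
  have hGeq : G = (GammaF φ)ᶜ.erase x := by rw [← hx, Finset.erase_insert hxG]
  have hfacets : ∀ ψ : P → Fin n,
      G ⊆ (GammaF ψ)ᶜ ↔ ψ = φ ∨ ψ = Function.update φ x.1 x.2 := fun ψ => by
    rw [hGeq, Finset.subset_compl_comm, Finset.compl_erase, compl_compl, GammaF_subset_insert_iff]
  refine ⟨(GammaF φ)ᶜ, (GammaF (Function.update φ x.1 x.2))ᶜ, fun h => hxφ ?_, fun F => ?_⟩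
  · rw [compl_inj_iff.1 h, mem_GammaF]
    exact Function.update_self _ _ _
  rw [isFacet_iff, setOf_monotone_eq_univ hanti]
  constructor
  · rintro ⟨⟨ψ, -, rfl⟩, hGψ⟩
    rcases (hfacets ψ).1 hGψ with rfl | rfl
    exacts [Or.inl rfl, Or.inr rfl]
  · rintro (rfl | rfl)
    exacts [⟨⟨φ, trivial, rfl⟩, (hfacets φ).2 (Or.inl rfl)⟩,
      ⟨⟨_, trivial, rfl⟩, (hfacets _).2 (Or.inr rfl)⟩]
end
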